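/- arXiv:2412.13537 — 8 statements merged into one kernel-verified Lean document; each statement's English description precedes it below -/
import Mathlib

section
/- Every CKL-algebra is an MH-algebra. That is, if A is a modal algebra in which C x ≤ E(C x) for all x and C x is the greatest lower bound of {E^n x : n ∈ ω} for all x, then A also satisfies C x ≤ x and C(x ⇒ E x) ≤ (x ⇒ C x) for all x, where a ⇒ b denotes ¬a ⊔ b. -/
/-- Every CKL-algebra is an MH-algebra. -/
theorem stmt1 {I α : Type*} [Fintype I] [Nonempty I] [BooleanAlgebra α]
    (K : I → α → α) (C : α → α)
    (hK1 : ∀ i, K i (⊤ : α) = ⊤)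
    (hK2 : ∀ i x y, K i (x ⊓ y) = K i x ⊓ K i y)
    (hC1 : C (⊤ : α) = ⊤)
    (hC2 : ∀ x y, C (x ⊓ y) = C x ⊓ C y)
    (E : α → α) (hE : ∀ x, E x = Finset.univ.inf fun i => K i x)
    (hCE : ∀ x, C x ≤ E (C x))
    (hGLB : ∀ x, IsGLB (Set.range fun n => E^[n] x) (C x)) :
    (∀ x, C x ≤ x) ∧ (∀ x, C (xᶜ ⊔ E x) ≤ xᶜ ⊔ C x) := by
  have hT : ∀ x, C x ≤ x := fun x => (hGLB x).1 ⟨0, rfl⟩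
  refine ⟨hT, fun x => ?_⟩
  have hKmono : ∀ i, ∀ a b : α, a ≤ b → K i a ≤ K i b := by
    intro i a b hab
    have : K i (a ⊓ b) = K i a ⊓ K i b := hK2 i a b
    rw [inf_eq_left.mpr hab] at this
    rw [this]; exact inf_le_right
  have hEmono : ∀ a b : α, a ≤ b → E a ≤ E b := by
    intro a b hab
    rw [hE, hE]
    exact Finset.inf_mono_fun fun i _ => hKmono i a b hab
  have hEinf : ∀ a b : α, E (a ⊓ b) = E a ⊓ E b := by
    intro a b
    refine le_antisymm (le_inf (hEmono _ _ inf_le_left) (hEmono _ _ inf_le_right)) ?_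
    rw [hE, hE, hE, Finset.le_inf_iff]
    intro i hi
    rw [hK2]
    exact inf_le_inf (Finset.inf_le hi) (Finset.inf_le hi)
  set c := C (xᶜ ⊔ E x) with hc
  -- key: x ⊓ c ≤ E (x ⊓ c)
  have key : x ⊓ c ≤ E (x ⊓ c) := by
    have h1 : x ⊓ c ≤ E x := by
      have : c ≤ xᶜ ⊔ E x := hT _
      calc x ⊓ c ≤ x ⊓ (xᶜ ⊔ E x) := inf_le_inf_left _ this
        _ = x ⊓ E x := by rw [inf_sup_left, inf_compl_eq_bot, bot_sup_eq]
        _ ≤ E x := inf_le_right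
    have h2 : x ⊓ c ≤ E c := le_trans inf_le_right (hCE _)
    rw [hEinf]
    exact le_inf h1 h2
  have hn : ∀ n, x ⊓ c ≤ E^[n] (x ⊓ c) := by
    intro n
    induction n with
    | zero => simp
    | succ n ih =>
      rw [Function.iterate_succ_apply']
      exact le_trans key (hEmono _ _ ih)
  have hlb : x ⊓ c ≤ C x := by
    refine (hGLB x).2 ?_
    rintro _ ⟨n, rfl⟩
    refine le_trans (hn n) ?_
    exact Monotone.iterate (fun a b h => hEmono a b h) n inf_le_left
  calc c = (x ⊓ c) ⊔ (xᶜ ⊓ c) := by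
        rw [← inf_sup_right, sup_compl_eq_top, top_inf_eq]
    _ ≤ C x ⊔ xᶜ := sup_le_sup hlb inf_le_left
    _ = xᶜ ⊔ C x := sup_comm _ _
end

section
/- In a CKL-algebra, for every element x and every natural number n, x ⊓ C(x ⇒ E x) ≤ E^n x. -/
/-- In a CKL-algebra, x ⊓ C(x ⇒ E x) ≤ E^n x for all n. -/
theorem stmt2 {I α : Type*} [Fintype I] [Nonempty I] [BooleanAlgebra α]
    (K : I → α → α) (C : α → α)
    (hK1 : ∀ i, K i (⊤ : α) = ⊤)
    (hK2 : ∀ i x y, K i (x ⊓ y) = K i x ⊓ K i y)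
    (hC1 : C (⊤ : α) = ⊤)
    (hC2 : ∀ x y, C (x ⊓ y) = C x ⊓ C y)
    (E : α → α) (hE : ∀ x, E x = Finset.univ.inf fun i => K i x)
    (hCE : ∀ x, C x ≤ E (C x))
    (hGLB : ∀ x, IsGLB (Set.range fun m => E^[m] x) (C x)) :
    ∀ (x : α) (n : ℕ), x ⊓ C (xᶜ ⊔ E x) ≤ E^[n] x := by
  -- K i is monotone
  have hKmono : ∀ i, Monotone (K i) := by
    intro i a b hab
    have : K i (a ⊓ b) = K i a ⊓ K i b := hK2 i a b
    rw [inf_eq_left.mpr hab] at this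
    exact this ▸ inf_le_right
  have hEmono : Monotone E := by
    intro a b hab
    rw [hE a, hE b]
    exact Finset.inf_mono_fun fun i _ => hKmono i hab
  have hEinf : ∀ a b, E (a ⊓ b) = E a ⊓ E b := by
    intro a b
    simp only [hE, hK2]
    exact Finset.inf_inf
  have hEitermono : ∀ n, Monotone (E^[n]) := fun n => hEmono.iterate n
  have haux : ∀ a : α, a ≤ E a → ∀ n, a ≤ E^[n] a := by
    intro a ha n
    induction n with
    | zero => simp
    | succ n ih =>
      rw [Function.iterate_succ_apply]
      exact le_trans ih (hEitermono n ha)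
  intro x n
  set c := C (xᶜ ⊔ E x) with hc
  have hclex : c ≤ xᶜ ⊔ E x := by
    have := (hGLB (xᶜ ⊔ E x)).1 (Set.mem_range.mpr ⟨0, rfl⟩)
    simpa using this
  have h1 : x ⊓ c ≤ E x := by
    calc x ⊓ c ≤ x ⊓ (xᶜ ⊔ E x) := inf_le_inf_left x hclex
    _ = x ⊓ E x := by rw [inf_sup_left]; simp
    _ ≤ E x := inf_le_right
  have h2 : x ⊓ c ≤ E (x ⊓ c) := by
    rw [hEinf]
    exact le_inf h1 (le_trans inf_le_right (hCE _))
  calc x ⊓ c ≤ E^[n] (x ⊓ c) := haux _ h2 n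
  _ ≤ E^[n] x := hEitermono n inf_le_left
end

section
/- Every ω-complete and ω-multiplicative MH-algebra is a CKL-algebra. In particular, in such an algebra, C x equals the countable infimum ⊓_{n∈ω} E^n x for every x. -/
/-- Every ω-complete, ω-multiplicative MH-algebra is a CKL-algebra. -/
theorem stmt3 {I α : Type*} [Fintype I] [Nonempty I] [BooleanAlgebra α]
    (K : I → α → α) (C : α → α)
    (hK1 : ∀ i, K i (⊤ : α) = ⊤)
    (hK2 : ∀ i x y, K i (x ⊓ y) = K i x ⊓ K i y)
    (hC1 : C (⊤ : α) = ⊤)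
    (hC2 : ∀ x y, C (x ⊓ y) = C x ⊓ C y)
    (E : α → α) (hE : ∀ x, E x = Finset.univ.inf fun i => K i x)
    -- ω-completeness
    (hcomp : ∀ S : Set α, S.Countable → (∃ a, IsGLB S a) ∧ (∃ b, IsLUB S b))
    -- ω-multiplicativity of each modal operator
    (hmulK : ∀ i (S : Set α) (a : α), S.Countable → IsGLB S a → IsGLB (K i '' S) (K i a))
    (hmulC : ∀ (S : Set α) (a : α), S.Countable → IsGLB S a → IsGLB (C '' S) (C a))
    -- MH axioms
    (hMH1 : ∀ x, C x ≤ x)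
    (hMH2 : ∀ x, C x ≤ E (C x))
    (hMH3 : ∀ x, C (xᶜ ⊔ E x) ≤ xᶜ ⊔ C x) :
    ∀ x, C x ≤ E (C x) ∧ IsGLB (Set.range fun n => E^[n] x) (C x) := by
  -- monotonicity of K i
  have Kmono : ∀ i, Monotone (K i) := by
    intro i a b hab
    have : K i (a ⊓ b) = K i a ⊓ K i b := hK2 i a b
    rw [inf_eq_left.2 hab] at this
    exact this ▸ inf_le_right
  have Emono : ∀ a b : α, a ≤ b → E a ≤ E b := by
    intro a b hab
    rw [hE a, hE b]
    exact Finset.inf_mono_fun fun i _ => Kmono i hab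
  have Cmono : ∀ a b : α, a ≤ b → C a ≤ C b := by
    intro a b hab
    have : C (a ⊓ b) = C a ⊓ C b := hC2 a b
    rw [inf_eq_left.2 hab] at this
    exact this ▸ inf_le_right
  intro x
  refine ⟨hMH2 x, ?_⟩
  set S : Set α := Set.range fun n => E^[n] x with hS
  have hSc : S.Countable := Set.countable_range _
  obtain ⟨⟨a, ha⟩, -⟩ := hcomp S hSc
  -- C x is a lower bound of S
  have hiter : ∀ n, C x ≤ E^[n] x := by
    intro n
    induction n with
    | zero => exact hMH1 x
    | succ n ih =>
      rw [Function.iterate_succ_apply']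
      exact (hMH2 x).trans (Emono _ _ ih)
  have hlb : C x ∈ lowerBounds S := by
    rintro _ ⟨n, rfl⟩; exact hiter n
  -- a ≤ x
  have hax : a ≤ x := ha.1 ⟨0, rfl⟩
  -- a ≤ E a
  have haE : a ≤ E a := by
    rw [hE a]
    refine Finset.le_inf fun i _ => ?_
    have hKi := hmulK i S a hSc ha
    refine hKi.2 ?_
    rintro _ ⟨s, ⟨n, rfl⟩, rfl⟩
    have : a ≤ E^[n+1] x := ha.1 ⟨n+1, rfl⟩
    rw [Function.iterate_succ_apply', hE] at this
    exact this.trans (Finset.inf_le (Finset.mem_univ i))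
  -- since a ≤ E a, aᶜ ⊔ E a = ⊤
  have htop : aᶜ ⊔ E a = ⊤ := top_le_iff.1 (by
    calc (⊤ : α) = aᶜ ⊔ a := compl_sup_eq_top.symm
    _ ≤ aᶜ ⊔ E a := sup_le_sup_left haE _)
  have haC : a ≤ C a := by
    have h3 := hMH3 a
    rw [htop, hC1] at h3
    have : aᶜ ⊔ C a = ⊤ := top_le_iff.1 h3
    calc a = a ⊓ (aᶜ ⊔ C a) := by rw [this, inf_top_eq]
    _ = (a ⊓ aᶜ) ⊔ (a ⊓ C a) := inf_sup_left a _ _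
    _ = a ⊓ C a := by rw [inf_compl_eq_bot, bot_sup_eq]
    _ ≤ C a := inf_le_right
  have : a ≤ C x := haC.trans (Cmono a x hax)
  have hCa : C x = a := le_antisymm (ha.2 hlb) this
  rw [hCa]; exact ha
end

section
/- For any Kripke frame F = ⟨W, (R_{K_i})_{i∈I}, R_C⟩, the complex algebra F⁺ on the powerset of W (with Box_R S = {w : ∀v, wRv → v ∈ S} for each relation) is a CKL-algebra if and only if R_C is the reflexive-transitive closure of R_E := ⋃_{i∈I} R_{K_i}. -/
private def Rn {W : Type*} (R : W → W → Prop) : ℕ → W → W → Prop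
  | 0 => Eq
  | n+1 => fun w v => ∃ u, R w u ∧ Rn R n u v

private lemma rtg_iff_Rn {W : Type*} (R : W → W → Prop) (w v : W) :
    Relation.ReflTransGen R w v ↔ ∃ n, Rn R n w v := by
  constructor
  · intro h
    induction h using Relation.ReflTransGen.head_induction_on with
    | refl => exact ⟨0, rfl⟩
    | head hab _ ih => obtain ⟨n, hn⟩ := ih; exact ⟨n+1, _, hab, hn⟩
  · rintro ⟨n, hn⟩
    induction n generalizing w with
    | zero => cases hn; rfl
    | succ n ih => obtain ⟨u, h1, h2⟩ := hn; exact Relation.ReflTransGen.head h1 (ih u h2)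

/-- The complex algebra of a Kripke frame is a CKL-algebra iff R_C is the
reflexive-transitive closure of R_E = ⋃ᵢ R_{Kᵢ}. -/
theorem stmt5 {I W : Type*} [Fintype I] [Nonempty I] [Nonempty W]
    (RK : I → W → W → Prop) (RC : W → W → Prop)
    (Box : (W → W → Prop) → Set W → Set W)
    (hBox : ∀ R S, Box R S = {w | ∀ v, R w v → v ∈ S})
    (E : Set W → Set W) (hE : ∀ S, E S = ⋂ i, Box (RK i) S) :
    ((∀ S : Set W, Box RC S ⊆ E (Box RC S)) ∧
      ∀ S : Set W, IsGLB (Set.range fun n => E^[n] S) (Box RC S))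
    ↔ RC = Relation.ReflTransGen (fun w v => ∃ i, RK i w v) := by
  set RE : W → W → Prop := fun w v => ∃ i, RK i w v with hRE
  have hE' : ∀ S : Set W, E S = {w | ∀ v, RE w v → v ∈ S} := by
    intro S
    rw [hE]; ext w
    simp only [Set.mem_iInter, hBox, Set.mem_setOf_eq, hRE]
    constructor
    · rintro h v ⟨i, hi⟩; exact h i v hi
    · intro h i v hi; exact h v ⟨i, hi⟩
  -- iterates of E are boxes of n-step paths
  have key : ∀ (n : ℕ) (S : Set W), E^[n] S = {w | ∀ v, Rn RE n w v → v ∈ S} := by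
    intro n
    induction n with
    | zero => intro S; ext w; simp [Rn]
    | succ n ih =>
      intro S
      rw [Function.iterate_succ_apply', hE', ih S]
      ext w
      simp only [Set.mem_setOf_eq, Rn]
      constructor
      · rintro h v ⟨u, h1, h2⟩; exact h u h1 v h2
      · intro h u h1 v h2; exact h v ⟨u, h1, h2⟩
  -- the intersection of the iterates is the box of the refl-trans closure
  have hInter : ∀ S : Set W, (⋂ n, E^[n] S) = {w | ∀ v, Relation.ReflTransGen RE w v → v ∈ S} := by
    intro S
    ext w
    simp only [Set.mem_iInter, key, Set.mem_setOf_eq, rtg_iff_Rn]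
    constructor
    · rintro h v ⟨n, hn⟩; exact h n v hn
    · intro h n v hn; exact h v ⟨n, hn⟩
  constructor
  · rintro ⟨-, h2⟩
    have hBoxEq : ∀ S : Set W, Box RC S = {w | ∀ v, Relation.ReflTransGen RE w v → v ∈ S} := by
      intro S
      rw [← hInter S]
      have hglb : IsGLB (Set.range fun n => E^[n] S) (⋂ n, E^[n] S) := by
        have := isGLB_iInf (f := fun n => E^[n] S)
        simpa [iInf, Set.sInf_eq_sInter, Set.sInter_eq_iInter] using this
      exact (h2 S).unique hglb
    funext w v
    apply propext
    constructor
    · intro h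
      have hw : w ∈ Box RC {u | Relation.ReflTransGen RE w u} := by
        rw [hBoxEq]; intro v hv; exact hv
      rw [hBox] at hw
      exact hw v h
    · intro h
      have hw : w ∈ Box RC {u | RC w u} := by
        rw [hBox]; intro v hv; exact hv
      rw [hBoxEq] at hw
      exact hw v h
  · intro hRC
    have hBoxEq : ∀ S : Set W, Box RC S = {w | ∀ v, Relation.ReflTransGen RE w v → v ∈ S} := by
      intro S; rw [hBox, hRC]
    constructor
    · intro S w hw
      rw [hBoxEq] at hw
      rw [hE']
      intro v hv
      rw [hBoxEq]
      intro u hu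
      exact hw u (Relation.ReflTransGen.head hv hu)
    · intro S
      rw [hBoxEq, ← hInter]
      have := isGLB_iInf (f := fun n => E^[n] S)
      simpa [iInf, Set.sInf_eq_sInter, Set.sInter_eq_iInter] using this
end

section
/- For a Kripke frame with relations R_{K_i} (i ∈ I) and R_C, let R_E = ⋃_{i∈I} R_{K_i}, so that E S = ⋂_{i∈I} Box_{R_{K_i}} S = Box_{R_E} S on the powerset algebra; then R_C is the reflexive-transitive closure of R_E if and only if Box_{R_C} S = ⋂_{n∈ω} Box_{R_E}^n S for all S ⊆ W. -/
private def nstep {W : Type*} (R : W → W → Prop) : ℕ → W → W → Prop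
  | 0 => fun w v => w = v
  | n+1 => fun w v => ∃ u, R w u ∧ nstep R n u v

private lemma nstep_tail {W : Type*} {R : W → W → Prop} :
    ∀ {n w u v}, nstep R n w u → R u v → nstep R (n+1) w v := by
  intro n
  induction n with
  | zero => intro w u v h h'; cases h; exact ⟨v, h', rfl⟩
  | succ n ih =>
      rintro w u v ⟨x, hwx, hx⟩ h'
      exact ⟨x, hwx, ih hx h'⟩

private lemma nstep_iff_rtg {W : Type*} (R : W → W → Prop) (w v : W) :
    (∃ n, nstep R n w v) ↔ Relation.ReflTransGen R w v := by
  constructor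
  · rintro ⟨n, h⟩
    induction n generalizing w with
    | zero => cases h; exact .refl
    | succ n ih =>
        obtain ⟨u, hwu, h⟩ := h
        exact (Relation.ReflTransGen.single hwu).trans (ih u h)
  · intro h
    induction h with
    | refl => exact ⟨0, rfl⟩
    | tail h₁ h₂ ih =>
        obtain ⟨n, hn⟩ := ih
        exact ⟨n+1, nstep_tail hn h₂⟩

/-- R_C is the reflexive-transitive closure of R_E iff
Box_{R_C} S = ⋂ₙ Box_{R_E}ⁿ S for all S. -/
theorem stmt6 {I W : Type*} [Fintype I] [Nonempty I] [Nonempty W]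
    (RK : I → W → W → Prop) (RC : W → W → Prop)
    (Box : (W → W → Prop) → Set W → Set W)
    (hBox : ∀ R S, Box R S = {w | ∀ v, R w v → v ∈ S})
    (RE : W → W → Prop) (hRE : ∀ w v, RE w v ↔ ∃ i, RK i w v) :
    RC = Relation.ReflTransGen RE ↔
      ∀ S : Set W, Box RC S = ⋂ n : ℕ, (Box RE)^[n] S := by
  have iter : ∀ (n : ℕ) (S : Set W),
      (Box RE)^[n] S = {w | ∀ v, nstep RE n w v → v ∈ S} := by
    intro n
    induction n with
    | zero =>
        intro S
        ext w
        simp only [Function.iterate_zero, id_eq, Set.mem_setOf_eq]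
        constructor
        · intro h v hv; cases hv; exact h
        · intro h; exact h w rfl
    | succ n ih =>
        intro S
        rw [Function.iterate_succ_apply', ih, hBox]
        ext w
        simp only [Set.mem_setOf_eq, nstep]
        constructor
        · rintro h v ⟨u, hwu, hu⟩
          exact h u hwu v hu
        · intro h u hwu v huv
          exact h v ⟨u, hwu, huv⟩
  have inter : ∀ S : Set W,
      (⋂ n : ℕ, (Box RE)^[n] S) = {w | ∀ v, Relation.ReflTransGen RE w v → v ∈ S} := by
    intro S
    ext w
    simp only [Set.mem_iInter, iter, Set.mem_setOf_eq]
    constructor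
    · intro h v hv
      obtain ⟨n, hn⟩ := (nstep_iff_rtg RE w v).2 hv
      exact h n v hn
    · intro h n v hn
      exact h v ((nstep_iff_rtg RE w v).1 ⟨n, hn⟩)
  constructor
  · intro hRC S
    rw [hRC, hBox, inter]
  · intro h
    ext w v
    constructor
    · intro hwv
      have := h {u | Relation.ReflTransGen RE w u}
      rw [hBox, inter] at this
      have hw : w ∈ {w' | ∀ v, RC w' v → v ∈ {u | Relation.ReflTransGen RE w u}} := by
        rw [this]
        intro u hu
        exact hu
      exact hw v hwv
    · intro hwv
      have := h {u | RC w u}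
      rw [hBox, inter] at this
      have hw : w ∈ {w' | ∀ v, RC w' v → v ∈ {u | RC w u}} := fun _ h' => h'
      rw [this] at hw
      exact hw v hwv
end

section
/- There exists an MH-algebra that is not a CKL-algebra: the subalgebra S of 2^ω consisting of finite and cofinite subsets of ω, equipped with the operators K_n and C defined below, is an MH-algebra, but for the element a = ω \ {0}, the set {E^n a : n ∈ ω} has no greatest lower bound in S; hence C a is not the infimum of that set. -/
open scoped Classical

/-- Finite and cofinite subsets of ω. -/
def FC : Set (Set ℕ) := {x | x.Finite ∨ xᶜ.Finite}

/-- For cofinite `x ≠ univ`, the least even `i` such that every even `j ≥ i` lies in `x`. -/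
noncomputable def kk (x : Set ℕ) : ℕ :=
  sInf {i | Even i ∧ ∀ j, Even j → i ≤ j → j ∈ x}

/-- The knowledge operators of the counterexample algebra. -/
noncomputable def Kop (N n : ℕ) (x : Set ℕ) : Set ℕ :=
  if x = Set.univ then Set.univ
  else if x.Finite then ∅
  else {i | (Odd i ∨ (if n % N = kk x % N then kk x < i else kk x ≤ i)) ∧ i ∈ x}

/-- The common knowledge operator of the counterexample algebra. -/
noncomputable def Cop (x : Set ℕ) : Set ℕ :=
  if x = Set.univ then Set.univ else ∅

/-- The "everyone knows" operator. -/
noncomputable def Eop (N : ℕ) (x : Set ℕ) : Set ℕ :=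
  ⋂ n ∈ Finset.range N, Kop N n x

-- auxiliary lemmas

lemma cof_not_finite {x : Set ℕ} (hx : xᶜ.Finite) : ¬ x.Finite := by
  intro h
  have := h.union hx
  rw [Set.union_compl_self] at this
  exact Set.infinite_univ this

lemma kk_set_nonempty {x : Set ℕ} (hx : xᶜ.Finite) :
    {i | Even i ∧ ∀ j, Even j → i ≤ j → j ∈ x}.Nonempty := by
  obtain ⟨M, hM⟩ := hx.bddAbove
  refine ⟨2 * M + 2, ⟨M + 1, by ring⟩, fun j _ hj => ?_⟩
  by_contra hj'
  have := hM hj'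
  omega

lemma kk_mem {x : Set ℕ} (hx : xᶜ.Finite) :
    Even (kk x) ∧ ∀ j, Even j → kk x ≤ j → j ∈ x :=
  Nat.sInf_mem (kk_set_nonempty hx)

lemma kk_self_mem {x : Set ℕ} (hx : xᶜ.Finite) : kk x ∈ x :=
  (kk_mem hx).2 _ (kk_mem hx).1 le_rfl

lemma Kop_eq {x : Set ℕ} (hx : xᶜ.Finite) (hne : x ≠ Set.univ) (N n : ℕ) :
    Kop N n x = {i | (Odd i ∨ (if n % N = kk x % N then kk x < i else kk x ≤ i)) ∧ i ∈ x} := by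
  simp [Kop, hne, cof_not_finite hx]

lemma Eop_eq {x : Set ℕ} (hx : xᶜ.Finite) (hne : x ≠ Set.univ) {N : ℕ} (hN : 1 ≤ N) :
    Eop N x = {i | (Odd i ∨ kk x < i) ∧ i ∈ x} := by
  ext i
  simp only [Eop, Set.mem_iInter, Finset.mem_range, Kop_eq hx hne, Set.mem_setOf_eq]
  constructor
  · intro h
    have h1 := h (kk x % N) (Nat.mod_lt _ hN)
    rw [if_pos (Nat.mod_mod_of_dvd _ dvd_rfl)] at h1
    exact h1
  · rintro ⟨h1 | h1, h2⟩ n _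
    · exact ⟨Or.inl h1, h2⟩
    · refine ⟨Or.inr ?_, h2⟩
      split <;> omega

lemma Eop_univ (N : ℕ) : Eop N Set.univ = Set.univ := by
  simp [Eop, Kop]

lemma cond_max {k1 k2 i N n : ℕ} :
    (if n % N = max k1 k2 % N then max k1 k2 < i else max k1 k2 ≤ i) ↔
      (if n % N = k1 % N then k1 < i else k1 ≤ i) ∧
      (if n % N = k2 % N then k2 < i else k2 ≤ i) := by
  rcases lt_trichotomy k1 k2 with h | h | h
  · rw [max_eq_right h.le]
    constructor
    · intro hc
      have hk1 : k1 < i := by split at hc <;> omega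
      refine ⟨by split <;> omega, hc⟩
    · exact fun hc => hc.2
  · subst h
    simp only [max_self, and_self]
  · rw [max_eq_left h.le]
    constructor
    · intro hc
      have hk2 : k2 < i := by split at hc <;> omega
      exact ⟨hc, by split <;> omega⟩
    · exact fun hc => hc.1

lemma kk_inter {x y : Set ℕ} (hx : xᶜ.Finite) (hy : yᶜ.Finite) :
    kk (x ∩ y) = max (kk x) (kk y) := by
  refine le_antisymm (Nat.sInf_le ?_) (le_csInf (kk_set_nonempty (by
    rw [Set.compl_inter]; exact hx.union hy)) ?_)
  · refine ⟨?_, fun j hj hle => ⟨(kk_mem hx).2 j hj (le_trans (le_max_left _ _) hle),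
      (kk_mem hy).2 j hj (le_trans (le_max_right _ _) hle)⟩⟩
    rcases max_cases (kk x) (kk y) with ⟨h, _⟩ | ⟨h, _⟩ <;> rw [h]
    exacts [(kk_mem hx).1, (kk_mem hy).1]
  · rintro b ⟨hb1, hb2⟩
    refine max_le (Nat.sInf_le ⟨hb1, fun j hj hle => (hb2 j hj hle).1⟩)
      (Nat.sInf_le ⟨hb1, fun j hj hle => (hb2 j hj hle).2⟩)

lemma iter_Eop {N : ℕ} (hN : 1 ≤ N) :
    ∀ n, (Eop N)^[n] ({0}ᶜ : Set ℕ) = {i | Odd i ∨ 2 * n < i} := by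
  intro n
  induction n with
  | zero =>
    ext i
    simp only [Function.iterate_zero, id_eq, Set.mem_compl_iff, Set.mem_singleton_iff,
      Set.mem_setOf_eq]
    constructor
    · intro h; right; omega
    · rintro (h | h)
      · rintro rfl; exact (Nat.not_odd_iff_even.mpr (Even.zero)) h
      · omega
  | succ n ih =>
    rw [Function.iterate_succ_apply', ih]
    have hcof : ({i : ℕ | Odd i ∨ 2 * n < i})ᶜ.Finite := by
      refine Set.Finite.subset (Set.finite_Iic (2 * n)) ?_
      intro i hi
      simp only [Set.mem_compl_iff, Set.mem_setOf_eq, not_or, not_lt] at hi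
      exact hi.2
    have hne : ({i : ℕ | Odd i ∨ 2 * n < i}) ≠ Set.univ := by
      intro h
      have : (0 : ℕ) ∈ ({i : ℕ | Odd i ∨ 2 * n < i}) := h ▸ Set.mem_univ 0
      simp only [Set.mem_setOf_eq] at this
      rcases this with h' | h'
      · exact (Nat.not_odd_iff_even.mpr Even.zero) h'
      · omega
    have hkk : kk ({i : ℕ | Odd i ∨ 2 * n < i}) = 2 * n + 2 := by
      refine le_antisymm (Nat.sInf_le ⟨⟨n + 1, by ring⟩, fun j hj hle => by
        simp only [Set.mem_setOf_eq]; right; omega⟩) (le_csInf (kk_set_nonempty hcof) ?_)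
      rintro b ⟨hb1, hb2⟩
      by_contra hlt
      push_neg at hlt
      have hble : b ≤ 2 * n := by
        rcases hb1 with ⟨c, hc⟩; omega
      have := hb2 (2 * n) ⟨n, by ring⟩ hble
      simp only [Set.mem_setOf_eq] at this
      rcases this with h' | h'
      · rcases h' with ⟨c, hc⟩; omega
      · omega
    rw [Eop_eq hcof hne hN, hkk]
    ext i
    simp only [Set.mem_setOf_eq]
    constructor
    · rintro ⟨h1 | h1, h2⟩
      · exact Or.inl h1
      · right; omega
    · rintro (h | h)
      · exact ⟨Or.inl h, Or.inl h⟩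
      · exact ⟨Or.inr (by omega), Or.inr (by omega)⟩

lemma odds_infinite : {i : ℕ | Odd i}.Infinite := by
  apply Set.infinite_of_injective_forall_mem (f := fun n : ℕ => 2 * n + 1)
  · intro a b h
    simp only at h
    omega
  · intro n
    exact ⟨n, rfl⟩

lemma evens_infinite : {i : ℕ | Even i}.Infinite := by
  apply Set.infinite_of_injective_forall_mem (f := fun n : ℕ => 2 * n)
  · intro a b h
    simp only at h
    omega
  · intro n
    exact ⟨n, by ring⟩

/-- There exists an MH-algebra that is not a CKL-algebra: the algebra of finite and
cofinite subsets of ω with the operators `Kop` and `Cop` is an MH-algebra, but the set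
`{Eⁿ a : n ∈ ω}` with `a = ω \ {0}` has no greatest lower bound in it. -/
theorem stmt7 (N : ℕ) (hN : 1 ≤ N) :
    -- closure of the carrier under the operators
    (∀ n < N, ∀ x ∈ FC, Kop N n x ∈ FC) ∧ (∀ x ∈ FC, Cop x ∈ FC) ∧
    -- the operators are normal modal operators
    (∀ n < N, Kop N n Set.univ = Set.univ) ∧
    (∀ n < N, ∀ x ∈ FC, ∀ y ∈ FC, Kop N n (x ∩ y) = Kop N n x ∩ Kop N n y) ∧
    (Cop Set.univ = Set.univ) ∧
    (∀ x ∈ FC, ∀ y ∈ FC, Cop (x ∩ y) = Cop x ∩ Cop y) ∧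
    -- MH-algebra axioms
    (∀ x ∈ FC, Cop x ⊆ x) ∧
    (∀ x ∈ FC, Cop x ⊆ Eop N (Cop x)) ∧
    (∀ x ∈ FC, Cop (xᶜ ∪ Eop N x) ⊆ xᶜ ∪ Cop x) ∧
    -- failure of the CKL condition: {Eⁿ a} has no greatest lower bound in FC
    ¬ ∃ b ∈ FC, (∀ n : ℕ, b ⊆ (Eop N)^[n] ({0}ᶜ : Set ℕ)) ∧
        ∀ c ∈ FC, (∀ n : ℕ, c ⊆ (Eop N)^[n] ({0}ᶜ : Set ℕ)) → c ⊆ b := by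
  have hCop_mem : ∀ x : Set ℕ, Cop x ∈ FC := by
    intro x
    unfold Cop
    split
    · exact Or.inr (by simp)
    · exact Or.inl (Set.finite_empty)
  refine ⟨?_, fun x _ => hCop_mem x, ?_, ?_, ?_, ?_, ?_, ?_, ?_, ?_⟩
  · -- Kop closure
    intro n _ x hx
    by_cases hu : x = Set.univ
    · subst hu; simp only [Kop, if_pos rfl]; exact Or.inr (by simp)
    rcases hx with hfin | hcof
    · simp only [Kop, if_neg hu, if_pos hfin]; exact Or.inl Set.finite_empty
    · rw [Kop_eq hcof hu]
      refine Or.inr (Set.Finite.subset (hcof.union (Set.finite_Iic (kk x))) ?_)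
      intro i hi
      simp only [Set.mem_compl_iff, Set.mem_setOf_eq] at hi
      simp only [Set.mem_union, Set.mem_compl_iff, Set.mem_Iic]
      rcases not_and_or.mp hi with h | h
      · push_neg at h
        right
        have := h.2
        split at this <;> omega
      · exact Or.inl h
  · intro n _; simp [Kop]
  · -- multiplicativity of Kop
    intro n _ x hx y hy
    by_cases hxu : x = Set.univ
    · subst hxu; simp [Kop, Set.univ_inter]
    by_cases hyu : y = Set.univ
    · subst hyu; simp [Kop, Set.inter_univ]
    rcases hx with hxf | hxc
    · have h1 : (x ∩ y).Finite := hxf.inter_of_left y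
      have h2 : x ∩ y ≠ Set.univ := by
        intro h; exact cof_not_finite (by simp [h]) (h ▸ h1)
      simp [Kop, hxu, hxf, h2, h1]
    rcases hy with hyf | hyc
    · have h1 : (x ∩ y).Finite := hyf.inter_of_right x
      have h2 : x ∩ y ≠ Set.univ := by
        intro h; exact cof_not_finite (by simp [h]) (h ▸ h1)
      simp [Kop, hyu, hyf, h2, h1]
    · have hic : (x ∩ y)ᶜ.Finite := by rw [Set.compl_inter]; exact hxc.union hyc
      have hiu : x ∩ y ≠ Set.univ := by
        intro h
        exact hxu (Set.eq_univ_of_univ_subset (h ▸ Set.inter_subset_left))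
      rw [Kop_eq hic hiu, Kop_eq hxc hxu, Kop_eq hyc hyu, kk_inter hxc hyc]
      ext i
      simp only [Set.mem_setOf_eq, Set.mem_inter_iff]
      rw [cond_max]
      tauto
  · simp [Cop]
  · intro x _ y _
    have hiff : x ∩ y = Set.univ ↔ x = Set.univ ∧ y = Set.univ := by
      constructor
      · intro h
        exact ⟨Set.eq_univ_of_univ_subset (h ▸ Set.inter_subset_left),
          Set.eq_univ_of_univ_subset (h ▸ Set.inter_subset_right)⟩
      · rintro ⟨rfl, rfl⟩; simp
    by_cases hx : x = Set.univ <;> by_cases hy : y = Set.univ <;>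
      simp_all [Cop]
  · intro x _
    unfold Cop
    split
    · rename_i h; rw [h]
    · exact Set.empty_subset x
  · intro x _
    by_cases h : x = Set.univ
    · simp [Cop, h, Eop_univ]
    · simp [Cop, h]
  · -- third MH axiom
    intro x hx
    by_cases h : xᶜ ∪ Eop N x = Set.univ
    · have hsub : x ⊆ Eop N x := by
        intro i hi
        have : i ∈ xᶜ ∪ Eop N x := h ▸ Set.mem_univ i
        rcases this with h' | h'
        · exact absurd hi h'
        · exact h'
      by_cases hxu : x = Set.univ
      · intro i _; right; simp [Cop, hxu]
      rcases hx with hxf | hxc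
      · -- x finite; show x = ∅, then xᶜ = univ
        have hE : Eop N x = ∅ := by
          have : Kop N 0 x = ∅ := by simp [Kop, hxu, hxf]
          apply Set.eq_empty_of_subset_empty
          intro i hi
          rw [← this]
          exact Set.mem_iInter₂.mp hi 0 (Finset.mem_range.mpr hN)
        have hxe : x = ∅ := by
          rw [hE] at hsub
          exact Set.eq_empty_of_subset_empty hsub
        intro i _
        left
        simp [hxe]
      · exfalso
        have hk := kk_self_mem hxc
        have := hsub hk
        rw [Eop_eq hxc hxu hN] at this
        rcases this with ⟨h1 | h1, _⟩
        · exact (Nat.not_odd_iff_even.mpr (kk_mem hxc).1) h1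
        · omega
    · simp [Cop, h]
  · -- no greatest lower bound
    rintro ⟨b, hbFC, hb, hmax⟩
    have hodd : ∀ i ∈ b, Odd i := by
      intro i hi
      have := hb i hi
      rw [iter_Eop hN] at this
      simp only [Set.mem_setOf_eq] at this
      rcases this with h | h
      · exact h
      · omega
    have hbfin : b.Finite := by
      rcases hbFC with h | h
      · exact h
      · exfalso
        have hsub : {i : ℕ | Even i} ⊆ bᶜ := fun i hi hib =>
          (Nat.not_odd_iff_even.mpr hi) (hodd i hib)
        exact (evens_infinite.mono hsub) h
    obtain ⟨m, hm1, hm2⟩ := (odds_infinite.diff hbfin).nonempty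
    have hcsub : ∀ n : ℕ, insert m b ⊆ (Eop N)^[n] ({0}ᶜ : Set ℕ) := by
      intro n
      rw [iter_Eop hN]
      intro i hi
      rcases Set.mem_insert_iff.mp hi with rfl | hi
      · exact Or.inl hm1
      · have h2 := hb n hi
        rw [iter_Eop hN] at h2
        exact h2
    have hsub := hmax (insert m b) (Or.inl (hbfin.insert m)) hcsub
    exact hm2 (hsub (Set.mem_insert m b))
end

section
/- Conversely, if a Kripke frame ⟨W, (R_{K_i})_{i∈I}, R_C⟩ validates all three schemas Cφ → φ, Cφ → E(Cφ), and C(φ → Eφ) → (φ → Cφ) (semantically: for all S ⊆ W, Box_{R_C} S ⊆ S, Box_{R_C} S ⊆ E(Box_{R_C} S), and Box_{R_C}(¬S ∪ E S) ⊆ ¬S ∪ Box_{R_C} S), then R_C is the reflexive-transitive closure of R_E = ⋃_i R_{K_i}. -/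
/-- If a Kripke frame validates Cφ → φ, Cφ → E(Cφ), and C(φ → Eφ) → (φ → Cφ),
then R_C is the reflexive-transitive closure of R_E = ⋃ᵢ R_{Kᵢ}. -/
theorem stmt17 {I W : Type*} [Fintype I] [Nonempty I]
    (RK : I → W → W → Prop) (RC : W → W → Prop)
    (Box : (W → W → Prop) → Set W → Set W)
    (hBox : ∀ R S, Box R S = {w | ∀ v, R w v → v ∈ S})
    (E : Set W → Set W) (hE : ∀ S, E S = ⋂ i, Box (RK i) S)
    (h1 : ∀ S : Set W, Box RC S ⊆ S)
    (h2 : ∀ S : Set W, Box RC S ⊆ E (Box RC S))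
    (h3 : ∀ S : Set W, Box RC (Sᶜ ∪ E S) ⊆ Sᶜ ∪ Box RC S) :
    RC = Relation.ReflTransGen (fun w v => ∃ i, RK i w v) := by
  simp only [hBox] at h1 h2 h3
  simp only [hE, hBox] at h2 h3
  have refl : ∀ w, RC w w := by
    intro w
    exact h1 {v | RC w v} (by intro v hv; exact hv)
  have absorb : ∀ w x y, (∃ i, RK i w x) → RC x y → RC w y := by
    intro w x y ⟨i, hi⟩ hxy
    have hmem : w ∈ {u | ∀ v, RC u v → v ∈ {v | RC w v}} := fun v hv => hv
    have := h2 {v | RC w v} hmem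
    simp only [Set.mem_iInter] at this
    exact this i x hi y hxy
  ext w v
  constructor
  · intro hwv
    set S : Set W := {v | Relation.ReflTransGen (fun w v => ∃ i, RK i w v) w v} with hS
    have hw' : w ∈ {u | ∀ v, RC u v → v ∈ Sᶜ ∪ ⋂ i, {x | ∀ z, RK i x z → z ∈ S}} := by
      intro u _
      by_cases hu : u ∈ S
      · right
        simp only [Set.mem_iInter]
        intro j z hz
        exact hu.tail ⟨j, hz⟩
      · exact Or.inl hu
    rcases h3 S hw' with h | h
    · exact absurd Relation.ReflTransGen.refl h
    · exact h v hwv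
  · intro hwv
    induction hwv using Relation.ReflTransGen.head_induction_on with
    | refl => exact refl _
    | head hre _ ih => exact absorb _ _ _ hre ih
end

section
/- An equation between modal-algebra terms that holds in every CKL-algebra also holds in every complex algebra of a CKL-frame, and conversely; hence the equational theory of CKL-algebras equals the equational theory of complex algebras of CKL-frames. -/
/-- Terms of modal algebras for common knowledge logic. -/
inductive MTerm (I : Type) : Type
  | var : ℕ → MTerm I
  | bot : MTerm I
  | top : MTerm I
  | neg : MTerm I → MTerm I
  | sup : MTerm I → MTerm I → MTerm I
  | inf : MTerm I → MTerm I → MTerm I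
  | know : I → MTerm I → MTerm I
  | ck : MTerm I → MTerm I

/-- Evaluation of a term in a Boolean algebra equipped with operators `K` and `C`. -/
def MTerm.eval {I α : Type} [BooleanAlgebra α] (K : I → α → α) (C : α → α)
    (v : ℕ → α) : MTerm I → α
  | .var p => v p
  | .bot => ⊥
  | .top => ⊤
  | .neg t => (MTerm.eval K C v t)ᶜ
  | .sup s t => MTerm.eval K C v s ⊔ MTerm.eval K C v t
  | .inf s t => MTerm.eval K C v s ⊓ MTerm.eval K C v t
  | .know i t => K i (MTerm.eval K C v t)
  | .ck t => C (MTerm.eval K C v t)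

/-- `(α, K, C)` is a CKL-algebra. -/
def IsCKL {I α : Type} [Fintype I] [BooleanAlgebra α] (K : I → α → α) (C : α → α) : Prop :=
  (∀ i, K i (⊤ : α) = ⊤) ∧ (∀ i x y, K i (x ⊓ y) = K i x ⊓ K i y) ∧
  C (⊤ : α) = ⊤ ∧ (∀ x y, C (x ⊓ y) = C x ⊓ C y) ∧
  (∀ x, C x ≤ Finset.univ.inf fun i => K i (C x)) ∧
  (∀ x, IsGLB (Set.range fun n => (fun y => Finset.univ.inf fun i => K i y)^[n] x) (C x))

/-- Box operator of a relation on the powerset algebra. -/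
def BoxR {W : Type} (R : W → W → Prop) (S : Set W) : Set W := {w | ∀ v, R w v → v ∈ S}

namespace CKLwork
set_option linter.unusedSectionVars false

open Relation

noncomputable local instance (I : Type) : DecidableEq (MTerm I) := Classical.decEq _

/-- refinement lemma -/
lemma ref {α : Type} [BooleanAlgebra α] {β : Type} (s : Finset β) (c : β → α) :
    ∀ x : α, x ≠ ⊥ → ∃ h : β → Bool, x ⊓ s.inf (fun g => if h g then c g else (c g)ᶜ) ≠ ⊥ := by
  classical
  induction s using Finset.induction_on with
  | empty => exact fun x hx => ⟨fun _ => true, by simpa using hx⟩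
  | @insert a s ha ih =>
    intro x hx
    have key : x ⊓ c a ≠ ⊥ ∨ x ⊓ (c a)ᶜ ≠ ⊥ := by
      by_contra hcon
      push_neg at hcon
      apply hx
      have : x ⊓ (c a ⊔ (c a)ᶜ) = ⊥ := by rw [inf_sup_left, hcon.1, hcon.2, bot_sup_eq]
      simpa using this
    rcases key with hk | hk
    · obtain ⟨h, hh⟩ := ih (x ⊓ c a) hk
      refine ⟨Function.update h a true, ?_⟩
      rw [Finset.inf_insert]
      have h1 : s.inf (fun g => if Function.update h a true g then c g else (c g)ᶜ)
          = s.inf (fun g => if h g then c g else (c g)ᶜ) :=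
        Finset.inf_congr rfl (fun g hg => by
          rw [Function.update_of_ne (by rintro rfl; exact ha hg)])
      rw [h1, Function.update_self, if_pos rfl, ← inf_assoc]
      exact hh
    · obtain ⟨h, hh⟩ := ih (x ⊓ (c a)ᶜ) hk
      refine ⟨Function.update h a false, ?_⟩
      rw [Finset.inf_insert]
      have h1 : s.inf (fun g => if Function.update h a false g then c g else (c g)ᶜ)
          = s.inf (fun g => if h g then c g else (c g)ᶜ) :=
        Finset.inf_congr rfl (fun g hg => by
          rw [Function.update_of_ne (by rintro rfl; exact ha hg)])
      rw [h1, Function.update_self]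
      simp only [Bool.false_eq_true, if_false]
      rw [← inf_assoc]
      exact hh


lemma K_finset_inf {α : Type} [BooleanAlgebra α] (k : α → α) (hk1 : k ⊤ = ⊤)
    (hk2 : ∀ x y, k (x ⊓ y) = k x ⊓ k y) {β : Type} (s : Finset β) (c : β → α) :
    k (s.inf c) = s.inf (fun b => k (c b)) := by
  classical
  induction s using Finset.induction_on with
  | empty => simpa using hk1
  | @insert a s ha ih => rw [Finset.inf_insert, Finset.inf_insert, hk2, ih]

lemma not_le_iff_ne_bot {α : Type} [BooleanAlgebra α] {x y : α} :
    ¬ x ≤ y ↔ x ⊓ yᶜ ≠ ⊥ := by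
  rw [← sdiff_eq, Ne, sdiff_eq_bot_iff]

/-- closure of a term -/
noncomputable def cl {I : Type} [Fintype I] : MTerm I → Finset (MTerm I)
  | .var p => {.var p}
  | .bot => {.bot}
  | .top => {.top}
  | .neg u => insert (.neg u) (cl u)
  | .sup u w => insert (.sup u w) (cl u ∪ cl w)
  | .inf u w => insert (.inf u w) (cl u ∪ cl w)
  | .know i u => insert (.know i u) (cl u)
  | .ck u => insert (.ck u) ((Finset.univ.image fun i => .know i (.ck u)) ∪ cl u)

variable {I : Type} [Fintype I]

lemma self_mem_cl (u : MTerm I) : u ∈ cl u := by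
  cases u <;> simp [cl]

lemma cl_know (u0 : MTerm I) : ∀ i u, .know i u ∈ cl u0 → u ∈ cl u0 := by
  induction u0 with
  | var p => simp [cl]
  | bot => simp [cl]
  | top => simp [cl]
  | neg w ih =>
    intro i u h
    simp only [cl, Finset.mem_insert] at h ⊢
    rcases h with h | h
    · exact absurd h (by simp)
    · exact Or.inr (ih i u h)
  | sup w1 w2 ih1 ih2 =>
    intro i u h
    simp only [cl, Finset.mem_insert, Finset.mem_union] at h ⊢
    rcases h with h | h | h
    · exact absurd h (by simp)
    · exact Or.inr (Or.inl (ih1 i u h))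
    · exact Or.inr (Or.inr (ih2 i u h))
  | inf w1 w2 ih1 ih2 =>
    intro i u h
    simp only [cl, Finset.mem_insert, Finset.mem_union] at h ⊢
    rcases h with h | h | h
    · exact absurd h (by simp)
    · exact Or.inr (Or.inl (ih1 i u h))
    · exact Or.inr (Or.inr (ih2 i u h))
  | know j w ih =>
    intro i u h
    simp only [cl, Finset.mem_insert] at h ⊢
    rcases h with h | h
    · obtain ⟨rfl, rfl⟩ : j = i ∧ w = u := by
        simpa [MTerm.know.injEq] using h.symm
      exact Or.inr (self_mem_cl _)
    · exact Or.inr (ih i u h)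
  | ck w ih =>
    intro i u h
    simp only [cl, Finset.mem_insert, Finset.mem_union, Finset.mem_image] at h ⊢
    rcases h with h | ⟨j, _, hj⟩ | h
    · exact absurd h (by simp)
    · obtain ⟨rfl, rfl⟩ : j = i ∧ MTerm.ck w = u := by
        simpa [MTerm.know.injEq] using hj
      exact Or.inl rfl
    · exact Or.inr (Or.inr (ih i u h))


lemma cl_ck (u0 : MTerm I) : ∀ u, .ck u ∈ cl u0 → u ∈ cl u0 ∧ ∀ i, .know i (.ck u) ∈ cl u0 := by
  induction u0 with
  | var p => simp [cl]
  | bot => simp [cl]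
  | top => simp [cl]
  | neg w ih =>
    intro u h
    simp only [cl, Finset.mem_insert] at h ⊢
    rcases h with h | h
    · exact absurd h (by simp)
    · exact ⟨Or.inr (ih u h).1, fun i => Or.inr ((ih u h).2 i)⟩
  | sup w1 w2 ih1 ih2 =>
    intro u h
    simp only [cl, Finset.mem_insert, Finset.mem_union] at h ⊢
    rcases h with h | h | h
    · exact absurd h (by simp)
    · exact ⟨Or.inr (Or.inl (ih1 u h).1), fun i => Or.inr (Or.inl ((ih1 u h).2 i))⟩
    · exact ⟨Or.inr (Or.inr (ih2 u h).1), fun i => Or.inr (Or.inr ((ih2 u h).2 i))⟩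
  | inf w1 w2 ih1 ih2 =>
    intro u h
    simp only [cl, Finset.mem_insert, Finset.mem_union] at h ⊢
    rcases h with h | h | h
    · exact absurd h (by simp)
    · exact ⟨Or.inr (Or.inl (ih1 u h).1), fun i => Or.inr (Or.inl ((ih1 u h).2 i))⟩
    · exact ⟨Or.inr (Or.inr (ih2 u h).1), fun i => Or.inr (Or.inr ((ih2 u h).2 i))⟩
  | know j w ih =>
    intro u h
    simp only [cl, Finset.mem_insert] at h ⊢
    rcases h with h | h
    · exact absurd h (by simp)
    · exact ⟨Or.inr (ih u h).1, fun i => Or.inr ((ih u h).2 i)⟩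
  | ck w ih =>
    intro u h
    simp only [cl, Finset.mem_insert, Finset.mem_union, Finset.mem_image] at h ⊢
    rcases h with h | ⟨j, _, hj⟩ | h
    · obtain rfl : w = u := by simpa [MTerm.ck.injEq] using h.symm
      exact ⟨Or.inr (Or.inr (self_mem_cl _)), fun i => Or.inr (Or.inl ⟨i, Finset.mem_univ i, rfl⟩)⟩
    · exact absurd hj (by simp)
    · exact ⟨Or.inr (Or.inr (ih u h).1), fun i => Or.inr (Or.inr ((ih u h).2 i))⟩

lemma cl_neg (u0 : MTerm I) : ∀ u, .neg u ∈ cl u0 → u ∈ cl u0 := by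
  induction u0 with
  | var p => simp [cl]
  | bot => simp [cl]
  | top => simp [cl]
  | neg w ih =>
    intro u h
    simp only [cl, Finset.mem_insert] at h ⊢
    rcases h with h | h
    · obtain rfl : w = u := by simpa [MTerm.neg.injEq] using h.symm
      exact Or.inr (self_mem_cl _)
    · exact Or.inr (ih u h)
  | sup w1 w2 ih1 ih2 =>
    intro u h
    simp only [cl, Finset.mem_insert, Finset.mem_union] at h ⊢
    rcases h with h | h | h
    · exact absurd h (by simp)
    · exact Or.inr (Or.inl (ih1 u h))
    · exact Or.inr (Or.inr (ih2 u h))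
  | inf w1 w2 ih1 ih2 =>
    intro u h
    simp only [cl, Finset.mem_insert, Finset.mem_union] at h ⊢
    rcases h with h | h | h
    · exact absurd h (by simp)
    · exact Or.inr (Or.inl (ih1 u h))
    · exact Or.inr (Or.inr (ih2 u h))
  | know j w ih =>
    intro u h
    simp only [cl, Finset.mem_insert] at h ⊢
    rcases h with h | h
    · exact absurd h (by simp)
    · exact Or.inr (ih u h)
  | ck w ih =>
    intro u h
    simp only [cl, Finset.mem_insert, Finset.mem_union, Finset.mem_image] at h ⊢
    rcases h with h | ⟨j, _, hj⟩ | h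
    · exact absurd h (by simp)
    · exact absurd hj (by simp)
    · exact Or.inr (Or.inr (ih u h))

lemma cl_sup (u0 : MTerm I) : ∀ u w, .sup u w ∈ cl u0 → u ∈ cl u0 ∧ w ∈ cl u0 := by
  induction u0 with
  | var p => simp [cl]
  | bot => simp [cl]
  | top => simp [cl]
  | neg w ih =>
    intro u w' h
    simp only [cl, Finset.mem_insert] at h ⊢
    rcases h with h | h
    · exact absurd h (by simp)
    · exact ⟨Or.inr (ih u w' h).1, Or.inr (ih u w' h).2⟩
  | sup w1 w2 ih1 ih2 =>
    intro u w' h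
    simp only [cl, Finset.mem_insert, Finset.mem_union] at h ⊢
    rcases h with h | h | h
    · obtain ⟨rfl, rfl⟩ : w1 = u ∧ w2 = w' := by simpa [MTerm.sup.injEq] using h.symm
      exact ⟨Or.inr (Or.inl (self_mem_cl _)), Or.inr (Or.inr (self_mem_cl _))⟩
    · exact ⟨Or.inr (Or.inl (ih1 u w' h).1), Or.inr (Or.inl (ih1 u w' h).2)⟩
    · exact ⟨Or.inr (Or.inr (ih2 u w' h).1), Or.inr (Or.inr (ih2 u w' h).2)⟩
  | inf w1 w2 ih1 ih2 =>
    intro u w' h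
    simp only [cl, Finset.mem_insert, Finset.mem_union] at h ⊢
    rcases h with h | h | h
    · exact absurd h (by simp)
    · exact ⟨Or.inr (Or.inl (ih1 u w' h).1), Or.inr (Or.inl (ih1 u w' h).2)⟩
    · exact ⟨Or.inr (Or.inr (ih2 u w' h).1), Or.inr (Or.inr (ih2 u w' h).2)⟩
  | know j w ih =>
    intro u w' h
    simp only [cl, Finset.mem_insert] at h ⊢
    rcases h with h | h
    · exact absurd h (by simp)
    · exact ⟨Or.inr (ih u w' h).1, Or.inr (ih u w' h).2⟩
  | ck w ih =>
    intro u w' h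
    simp only [cl, Finset.mem_insert, Finset.mem_union, Finset.mem_image] at h ⊢
    rcases h with h | ⟨j, _, hj⟩ | h
    · exact absurd h (by simp)
    · exact absurd hj (by simp)
    · exact ⟨Or.inr (Or.inr (ih u w' h).1), Or.inr (Or.inr (ih u w' h).2)⟩

lemma cl_inf (u0 : MTerm I) : ∀ u w, .inf u w ∈ cl u0 → u ∈ cl u0 ∧ w ∈ cl u0 := by
  induction u0 with
  | var p => simp [cl]
  | bot => simp [cl]
  | top => simp [cl]
  | neg w ih =>
    intro u w' h
    simp only [cl, Finset.mem_insert] at h ⊢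
    rcases h with h | h
    · exact absurd h (by simp)
    · exact ⟨Or.inr (ih u w' h).1, Or.inr (ih u w' h).2⟩
  | sup w1 w2 ih1 ih2 =>
    intro u w' h
    simp only [cl, Finset.mem_insert, Finset.mem_union] at h ⊢
    rcases h with h | h | h
    · exact absurd h (by simp)
    · exact ⟨Or.inr (Or.inl (ih1 u w' h).1), Or.inr (Or.inl (ih1 u w' h).2)⟩
    · exact ⟨Or.inr (Or.inr (ih2 u w' h).1), Or.inr (Or.inr (ih2 u w' h).2)⟩
  | inf w1 w2 ih1 ih2 =>
    intro u w' h
    simp only [cl, Finset.mem_insert, Finset.mem_union] at h ⊢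
    rcases h with h | h | h
    · obtain ⟨rfl, rfl⟩ : w1 = u ∧ w2 = w' := by simpa [MTerm.inf.injEq] using h.symm
      exact ⟨Or.inr (Or.inl (self_mem_cl _)), Or.inr (Or.inr (self_mem_cl _))⟩
    · exact ⟨Or.inr (Or.inl (ih1 u w' h).1), Or.inr (Or.inl (ih1 u w' h).2)⟩
    · exact ⟨Or.inr (Or.inr (ih2 u w' h).1), Or.inr (Or.inr (ih2 u w' h).2)⟩
  | know j w ih =>
    intro u w' h
    simp only [cl, Finset.mem_insert] at h ⊢
    rcases h with h | h
    · exact absurd h (by simp)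
    · exact ⟨Or.inr (ih u w' h).1, Or.inr (ih u w' h).2⟩
  | ck w ih =>
    intro u w' h
    simp only [cl, Finset.mem_insert, Finset.mem_union, Finset.mem_image] at h ⊢
    rcases h with h | ⟨j, _, hj⟩ | h
    · exact absurd h (by simp)
    · exact absurd hj (by simp)
    · exact ⟨Or.inr (Or.inr (ih u w' h).1), Or.inr (Or.inr (ih u w' h).2)⟩


lemma mem_finset_inf_set {W β : Type} (s : Finset β) (f : β → Set W) (x : W) :
    x ∈ s.inf f ↔ ∀ b ∈ s, x ∈ f b := by
  rw [Finset.inf_set_eq_iInter]; simp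

lemma isCKL_complex {W : Type} (RK : I → W → W → Prop) :
    IsCKL (fun i => BoxR (RK i)) (BoxR (Relation.ReflTransGen fun w u => ∃ i, RK i w u)) := by
  set RC := Relation.ReflTransGen fun w u => ∃ i, RK i w u with hRC
  have hbox_top : ∀ (R : W → W → Prop), BoxR R (⊤ : Set W) = ⊤ := by
    intro R; ext w; simp [BoxR]
  have hbox_inf : ∀ (R : W → W → Prop) (x y : Set W), BoxR R (x ⊓ y) = BoxR R x ⊓ BoxR R y := by
    intro R x y; ext w
    simp only [BoxR, Set.mem_setOf_eq, Set.mem_inter_iff, Set.inf_eq_inter]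
    exact ⟨fun h => ⟨fun v hv => (h v hv).1, fun v hv => (h v hv).2⟩,
      fun h v hv => ⟨h.1 v hv, h.2 v hv⟩⟩
  refine ⟨fun i => hbox_top _, fun i => hbox_inf _, hbox_top _, hbox_inf _, ?_, ?_⟩
  · intro x w hw
    rw [mem_finset_inf_set]
    intro i _ u hu z hz
    exact hw z (Relation.ReflTransGen.head ⟨i, hu⟩ hz)
  · intro x
    constructor
    · rintro y ⟨n, rfl⟩
      induction n generalizing x with
      | zero => exact fun w hw => hw w Relation.ReflTransGen.refl
      | succ n ih =>
        intro w hw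
        show w ∈ (fun y => Finset.univ.inf fun i => BoxR (RK i) y)^[n+1] x
        rw [Function.iterate_succ_apply]
        refine ih _ ?_
        intro u hu
        rw [mem_finset_inf_set]
        intro i _ z hz
        exact hw z (hu.tail ⟨i, hz⟩)
    · intro S hS w hw u hu
      -- hu : RC w u
      have key : ∃ n, ∀ y : Set W, w ∈ (fun y => Finset.univ.inf fun i => BoxR (RK i) y)^[n] y → u ∈ y := by
        induction hu with
        | refl => exact ⟨0, fun y h => h⟩
        | @tail b c hb hc ih =>
          obtain ⟨n, hn⟩ := ih
          refine ⟨n + 1, fun y h => ?_⟩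
          rw [Function.iterate_succ_apply] at h
          have hb' := hn _ h
          rw [mem_finset_inf_set] at hb'
          obtain ⟨i, hi⟩ := hc
          exact hb' i (Finset.mem_univ i) c hi
      obtain ⟨n, hn⟩ := key
      exact hn x (hS ⟨n, rfl⟩ hw)


section Model

variable {α : Type} [BooleanAlgebra α] (K : I → α → α) (C : α → α) (v : ℕ → α)
  (Γ : Finset (MTerm I))

noncomputable def atomFn (p : {x // x ∈ Γ} → Bool) : α :=
  Γ.attach.inf fun g => if p g then MTerm.eval K C v ↑g else (MTerm.eval K C v ↑g)ᶜ

def Wld : Type := {p : {x // x ∈ Γ} → Bool // atomFn K C v Γ p ≠ ⊥}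

instance : Finite (Wld K C v Γ) := Subtype.finite

noncomputable def aE (f : Wld K C v Γ) : α := atomFn K C v Γ f.1

def RKf (i : I) (f f' : Wld K C v Γ) : Prop :=
  ∀ u, MTerm.know i u ∈ Γ → aE K C v Γ f ≤ K i (MTerm.eval K C v u) →
    aE K C v Γ f' ≤ MTerm.eval K C v u

variable {K C v Γ}

lemma aE_le_lit (f : Wld K C v Γ) {g : MTerm I} (hg : g ∈ Γ) :
    aE K C v Γ f ≤ if f.1 ⟨g, hg⟩ then MTerm.eval K C v g else (MTerm.eval K C v g)ᶜ :=
  Finset.inf_le (Finset.mem_attach Γ ⟨g, hg⟩)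

lemma sign_true (f : Wld K C v Γ) {g : MTerm I} (hg : g ∈ Γ) :
    aE K C v Γ f ≤ MTerm.eval K C v g ↔ f.1 ⟨g, hg⟩ = true := by
  constructor
  · intro hle
    by_contra hb
    have hb' : f.1 ⟨g, hg⟩ = false := by simpa using hb
    have h2 := aE_le_lit f hg
    rw [hb'] at h2
    simp only [Bool.false_eq_true, if_false] at h2
    exact f.2 (le_bot_iff.1 (le_inf hle h2 |>.trans_eq (inf_compl_eq_bot)))
  · intro hb
    have h2 := aE_le_lit f hg
    rwa [hb, if_pos rfl] at h2

lemma sign_false (f : Wld K C v Γ) {g : MTerm I} (hg : g ∈ Γ) :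
    aE K C v Γ f ≤ (MTerm.eval K C v g)ᶜ ↔ f.1 ⟨g, hg⟩ = false := by
  constructor
  · intro hle
    by_contra hb
    have hb' : f.1 ⟨g, hg⟩ = true := by simpa using hb
    have h2 := (sign_true f hg).2 hb'
    exact f.2 (le_bot_iff.1 (le_inf h2 hle |>.trans_eq (inf_compl_eq_bot)))
  · intro hb
    have h2 := aE_le_lit f hg
    rw [hb] at h2
    simpa using h2

lemma not_le_sign (f : Wld K C v Γ) {g : MTerm I} (hg : g ∈ Γ) :
    ¬ aE K C v Γ f ≤ MTerm.eval K C v g ↔ aE K C v Γ f ≤ (MTerm.eval K C v g)ᶜ := by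
  rw [sign_true f hg, sign_false f hg]
  simp

lemma compat (f : Wld K C v Γ) {g : MTerm I} (hg : g ∈ Γ)
    (h : aE K C v Γ f ⊓ MTerm.eval K C v g ≠ ⊥) : aE K C v Γ f ≤ MTerm.eval K C v g := by
  by_contra hb
  rw [not_le_sign f hg] at hb
  exact h (le_bot_iff.1 ((inf_le_inf_right _ hb).trans_eq (by rw [inf_comm, inf_compl_eq_bot])))

lemma compat' (f : Wld K C v Γ) {g : MTerm I} (hg : g ∈ Γ)
    (h : aE K C v Γ f ⊓ (MTerm.eval K C v g)ᶜ ≠ ⊥) :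
    aE K C v Γ f ≤ (MTerm.eval K C v g)ᶜ := by
  by_contra hb
  rw [← not_le_sign f hg, not_not] at hb
  exact h (le_bot_iff.1 ((inf_le_inf_right _ hb).trans_eq (by rw [inf_compl_eq_bot])))

/-- every nonbot element meets some world's atom -/
lemma atom_meet {x : α} (hx : x ≠ ⊥) : ∃ f : Wld K C v Γ, x ⊓ aE K C v Γ f ≠ ⊥ := by
  obtain ⟨h, hh⟩ := ref Γ.attach (fun g => MTerm.eval K C v ↑g) x hx
  have hne : atomFn K C v Γ h ≠ ⊥ := fun hb => by
    rw [atomFn] at hb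
    rw [hb, inf_bot_eq] at hh
    exact hh rfl
  exact ⟨⟨h, hne⟩, by simpa [aE, atomFn] using hh⟩

end Model


section Exist

variable {α : Type} [BooleanAlgebra α] (K : I → α → α) (C : α → α) (v : ℕ → α)
  (Γ : Finset (MTerm I))

open Classical in
noncomputable def auxK (f : Wld K C v Γ) (i : I) : MTerm I → α
  | .know j u' =>
      if j = i ∧ aE K C v Γ f ≤ K i (MTerm.eval K C v u') then MTerm.eval K C v u' else ⊤
  | _ => ⊤

variable {K C v Γ}

lemma kmono (hK2 : ∀ i x y, K i (x ⊓ y) = K i x ⊓ K i y) (i : I) {x y : α} (h : x ≤ y) :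
    K i x ≤ K i y := by
  have : K i x = K i x ⊓ K i y := by rw [← hK2, inf_eq_left.2 h]
  rw [this]; exact inf_le_right

lemma exist (hK1 : ∀ i, K i (⊤ : α) = ⊤) (hK2 : ∀ i x y, K i (x ⊓ y) = K i x ⊓ K i y)
    (hP1 : ∀ (i : I) u, MTerm.know i u ∈ Γ → u ∈ Γ)
    (f : Wld K C v Γ) (i : I) (z : α)
    (hz : ∀ p : Wld K C v Γ, RKf K C v Γ i f p → aE K C v Γ p ≤ z) :
    aE K C v Γ f ≤ K i z := by
  classical
  set x0 : α := Γ.inf (auxK K C v Γ f i) with hx0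
  -- (1) aE f ≤ K i x0
  have h1 : aE K C v Γ f ≤ K i x0 := by
    rw [hx0, K_finset_inf (K i) (hK1 i) (hK2 i)]
    refine Finset.le_inf fun g hg => ?_
    cases g with
    | know j u' =>
      by_cases hc : j = i ∧ aE K C v Γ f ≤ K i (MTerm.eval K C v u')
      · rw [auxK, if_pos hc]; exact hc.2
      · rw [auxK, if_neg hc, hK1 i]; exact le_top
    | var p => simp [auxK, hK1 i]
    | bot => simp [auxK, hK1 i]
    | top => simp [auxK, hK1 i]
    | neg u => simp [auxK, hK1 i]
    | sup u w => simp [auxK, hK1 i]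
    | inf u w => simp [auxK, hK1 i]
    | ck u => simp [auxK, hK1 i]
  -- (2) atoms below x0 are RKf-successors
  have h2 : ∀ p : Wld K C v Γ, aE K C v Γ p ≤ x0 → RKf K C v Γ i f p := by
    intro p hp u hu hfu
    have hle : x0 ≤ auxK K C v Γ f i (MTerm.know i u) := Finset.inf_le hu
    rw [auxK, if_pos ⟨rfl, hfu⟩] at hle
    exact hp.trans hle
  -- (3) x0 ≤ z
  have h3 : x0 ≤ z := by
    by_contra hb
    rw [not_le_iff_ne_bot] at hb
    obtain ⟨p, hp⟩ := atom_meet (K := K) (C := C) (v := v) (Γ := Γ) hb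
    have hpx0 : aE K C v Γ p ≤ x0 := by
      refine Finset.le_inf fun g hg => ?_
      have hmeet : aE K C v Γ p ⊓ auxK K C v Γ f i g ≠ ⊥ := by
        intro hbb
        apply hp
        have : x0 ⊓ zᶜ ⊓ aE K C v Γ p ≤ aE K C v Γ p ⊓ auxK K C v Γ f i g :=
          le_inf inf_le_right ((inf_le_left.trans inf_le_left).trans (Finset.inf_le hg))
        exact le_bot_iff.1 (this.trans_eq hbb)
      cases g with
      | know j u' =>
        by_cases hc : j = i ∧ aE K C v Γ f ≤ K i (MTerm.eval K C v u')
        · rw [auxK, if_pos hc] at hmeet ⊢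
          exact compat p (hP1 j u' hg) hmeet
        · rw [auxK, if_neg hc]; exact le_top
      | var q => simp [auxK]
      | bot => simp [auxK]
      | top => simp [auxK]
      | neg u => simp [auxK]
      | sup u w => simp [auxK]
      | inf u w => simp [auxK]
      | ck u => simp [auxK]
    have hpz : aE K C v Γ p ≤ z := hz p (h2 p hpx0)
    have : x0 ⊓ zᶜ ⊓ aE K C v Γ p ≤ z ⊓ zᶜ :=
      le_inf (inf_le_right.trans hpz) (inf_le_left.trans inf_le_right)
    rw [inf_compl_eq_bot] at this
    exact hp (le_bot_iff.1 this)
  exact h1.trans (kmono hK2 i h3)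

end Exist


section Truth

variable {α : Type} [BooleanAlgebra α] {K : I → α → α} {C : α → α} {v : ℕ → α}
  {Γ : Finset (MTerm I)}
  (hK1 : ∀ i, K i (⊤ : α) = ⊤) (hK2 : ∀ i x y, K i (x ⊓ y) = K i x ⊓ K i y)
  (hCE : ∀ x, C x ≤ Finset.univ.inf fun i => K i (C x))
  (hGLB : ∀ x, IsGLB (Set.range fun n => (fun y => Finset.univ.inf fun i => K i y)^[n] x) (C x))
  (hP1 : ∀ (i : I) u, MTerm.know i u ∈ Γ → u ∈ Γ)
  (hPck : ∀ u, MTerm.ck u ∈ Γ → u ∈ Γ ∧ ∀ i, MTerm.know i (MTerm.ck u) ∈ Γ)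
  (hPneg : ∀ u, MTerm.neg u ∈ Γ → u ∈ Γ)
  (hPsup : ∀ u w, MTerm.sup u w ∈ Γ → u ∈ Γ ∧ w ∈ Γ)
  (hPinf : ∀ u w, MTerm.inf u w ∈ Γ → u ∈ Γ ∧ w ∈ Γ)

include hGLB in
lemma C_le_self (x : α) : C x ≤ x := (hGLB x).1 ⟨0, rfl⟩

include hCE in
lemma C_le_K (i : I) (x : α) : C x ≤ K i (C x) :=
  (hCE x).trans (Finset.inf_le (Finset.mem_univ i))

include hK1 hK2 hCE hGLB hP1 hPck hPneg hPsup hPinf in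
theorem truth (g : MTerm I) : g ∈ Γ →
    MTerm.eval (fun i => BoxR (RKf K C v Γ i))
      (BoxR (Relation.ReflTransGen fun a b => ∃ i, RKf K C v Γ i a b))
      (fun q => {f : Wld K C v Γ | aE K C v Γ f ≤ v q}) g
    = {f : Wld K C v Γ | aE K C v Γ f ≤ MTerm.eval K C v g} := by
  induction g with
  | var q => intro _; rfl
  | bot =>
    intro _
    ext f
    simp only [MTerm.eval, Set.bot_eq_empty, Set.mem_empty_iff_false, Set.mem_setOf_eq,
      false_iff]
    exact fun h => f.2 (le_bot_iff.1 h)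
  | top =>
    intro _
    ext f
    simp [MTerm.eval]
  | neg u ih =>
    intro hg
    have hu := hPneg u hg
    ext f
    simp only [MTerm.eval, Set.mem_compl_iff, ih hu, Set.mem_setOf_eq]
    exact not_le_sign f hu
  | sup u w ihu ihw =>
    intro hg
    obtain ⟨hu, hw⟩ := hPsup u w hg
    ext f
    simp only [MTerm.eval, Set.sup_eq_union, Set.mem_union, ihu hu, ihw hw, Set.mem_setOf_eq]
    constructor
    · rintro (h | h)
      · exact h.trans le_sup_left
      · exact h.trans le_sup_right
    · intro h
      by_cases hc : aE K C v Γ f ≤ MTerm.eval K C v u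
      · exact Or.inl hc
      · rw [not_le_sign f hu] at hc
        refine Or.inr ?_
        have := le_inf h hc
        rw [inf_sup_right, inf_compl_eq_bot, bot_sup_eq] at this
        exact this.trans inf_le_left
  | inf u w ihu ihw =>
    intro hg
    obtain ⟨hu, hw⟩ := hPinf u w hg
    ext f
    simp only [MTerm.eval, Set.inf_eq_inter, Set.mem_inter_iff, ihu hu, ihw hw,
      Set.mem_setOf_eq, le_inf_iff]
  | know i u ih =>
    intro hg
    have hu := hP1 i u hg
    ext f
    simp only [MTerm.eval, BoxR, ih hu, Set.mem_setOf_eq]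
    constructor
    · intro h
      exact exist hK1 hK2 hP1 f i (MTerm.eval K C v u) h
    · intro hle f' hR
      exact hR u hg hle
  | ck u ih =>
    intro hg
    have hu : u ∈ Γ := (hPck u hg).1
    ext f
    simp only [MTerm.eval, BoxR, ih hu, Set.mem_setOf_eq]
    constructor
    · intro h
      classical
      haveI : Fintype (Wld K C v Γ) := Fintype.ofFinite _
      set S : Finset (Wld K C v Γ) :=
        Finset.univ.filter
          (fun f' => Relation.ReflTransGen (fun a b => ∃ i, RKf K C v Γ i a b) f f') with hS
      set y : α := S.sup (aE K C v Γ) with hy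
      have hfS : f ∈ S := by
        simp only [hS, Finset.mem_filter, Finset.mem_univ, true_and]
        exact Relation.ReflTransGen.refl
      have hfy : aE K C v Γ f ≤ y := Finset.le_sup hfS
      have hyu : y ≤ MTerm.eval K C v u :=
        Finset.sup_le fun f' hf' => h f' (by
          simpa only [hS, Finset.mem_filter, Finset.mem_univ, true_and] using hf')
      have hyE : y ≤ Finset.univ.inf (fun i => K i y) := by
        refine Finset.le_inf fun i _ => Finset.sup_le fun f' hf' => ?_
        refine exist hK1 hK2 hP1 f' i y (fun p hp => ?_)
        refine Finset.le_sup ?_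
        simp only [hS, Finset.mem_filter, Finset.mem_univ, true_and] at hf' ⊢
        exact hf'.tail ⟨i, hp⟩
      have hEmono : ∀ {x1 x2 : α}, x1 ≤ x2 →
          Finset.univ.inf (fun i => K i x1) ≤ Finset.univ.inf (fun i => K i x2) :=
        fun h12 => Finset.le_inf fun i _ =>
          (Finset.inf_le (Finset.mem_univ i)).trans (kmono hK2 i h12)
      have hyn : ∀ n, y ≤ (fun w => Finset.univ.inf fun i => K i w)^[n] (MTerm.eval K C v u) := by
        intro n
        induction n with
        | zero => simpa using hyu
        | succ n ihn =>
          rw [Function.iterate_succ_apply']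
          exact hyE.trans (hEmono ihn)
      have hyC : y ≤ C (MTerm.eval K C v u) := by
        refine (hGLB (MTerm.eval K C v u)).2 ?_
        rintro z ⟨n, rfl⟩
        exact hyn n
      exact hfy.trans hyC
    · intro hle f' hRC
      have key : aE K C v Γ f' ≤ C (MTerm.eval K C v u) := by
        induction hRC with
        | refl => exact hle
        | @tail b c hb hc ihb =>
          obtain ⟨i, hR⟩ := hc
          exact hR (MTerm.ck u) ((hPck u hg).2 i)
            (ihb.trans (C_le_K hCE i (MTerm.eval K C v u)))
      exact key.trans (C_le_self hGLB (MTerm.eval K C v u))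

end Truth


end CKLwork


open CKLwork in
/-- The equational theory of CKL-algebras coincides with the equational theory of
complex algebras of CKL-frames. -/
theorem stmt18 {I : Type} [Fintype I] [Nonempty I] (s t : MTerm I) :
    (∀ (α : Type) [BooleanAlgebra α] (K : I → α → α) (C : α → α),
       IsCKL K C → ∀ v : ℕ → α, MTerm.eval K C v s = MTerm.eval K C v t)
    ↔
    (∀ (W : Type), Nonempty W →
       ∀ (RK : I → W → W → Prop) (RC : W → W → Prop),
         RC = Relation.ReflTransGen (fun w u => ∃ i, RK i w u) →
         ∀ v : ℕ → Set W,
           MTerm.eval (fun i => BoxR (RK i)) (BoxR RC) v s =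
           MTerm.eval (fun i => BoxR (RK i)) (BoxR RC) v t) := by
  classical
  constructor
  · intro hL W _ RK RC hRC v
    subst hRC
    exact hL (Set W) (fun i => BoxR (RK i)) (BoxR _) (isCKL_complex RK) v
  · intro hR α instBA K C hCKL v
    obtain ⟨hK1, hK2, hC1, hC2, hCE, hGLB⟩ := hCKL
    by_contra hne
    set Γ : Finset (MTerm I) := cl s ∪ cl t with hΓ
    have hP1 : ∀ (i : I) u, MTerm.know i u ∈ Γ → u ∈ Γ := by
      intro i u h
      rw [hΓ, Finset.mem_union] at h ⊢
      exact h.imp (cl_know s i u) (cl_know t i u)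
    have hPck : ∀ u, MTerm.ck u ∈ Γ → u ∈ Γ ∧ ∀ i, MTerm.know i (MTerm.ck u) ∈ Γ := by
      intro u h
      rw [hΓ, Finset.mem_union] at h
      rcases h with h | h
      · exact ⟨Finset.mem_union_left _ (cl_ck s u h).1,
          fun i => Finset.mem_union_left _ ((cl_ck s u h).2 i)⟩
      · exact ⟨Finset.mem_union_right _ (cl_ck t u h).1,
          fun i => Finset.mem_union_right _ ((cl_ck t u h).2 i)⟩
    have hPneg : ∀ u, MTerm.neg u ∈ Γ → u ∈ Γ := by
      intro u h
      rw [hΓ, Finset.mem_union] at h ⊢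
      exact h.imp (cl_neg s u) (cl_neg t u)
    have hPsup : ∀ u w, MTerm.sup u w ∈ Γ → u ∈ Γ ∧ w ∈ Γ := by
      intro u w h
      rw [hΓ, Finset.mem_union] at h
      rcases h with h | h
      · exact ⟨Finset.mem_union_left _ (cl_sup s u w h).1,
          Finset.mem_union_left _ (cl_sup s u w h).2⟩
      · exact ⟨Finset.mem_union_right _ (cl_sup t u w h).1,
          Finset.mem_union_right _ (cl_sup t u w h).2⟩
    have hPinf : ∀ u w, MTerm.inf u w ∈ Γ → u ∈ Γ ∧ w ∈ Γ := by
      intro u w h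
      rw [hΓ, Finset.mem_union] at h
      rcases h with h | h
      · exact ⟨Finset.mem_union_left _ (cl_inf s u w h).1,
          Finset.mem_union_left _ (cl_inf s u w h).2⟩
      · exact ⟨Finset.mem_union_right _ (cl_inf t u w h).1,
          Finset.mem_union_right _ (cl_inf t u w h).2⟩
    have hsΓ : s ∈ Γ := Finset.mem_union_left _ (self_mem_cl s)
    have htΓ : t ∈ Γ := Finset.mem_union_right _ (self_mem_cl t)
    -- nontriviality
    have htop : (⊤ : α) ≠ ⊥ := by
      intro h
      apply hne
      calc MTerm.eval K C v s = MTerm.eval K C v s ⊓ ⊥ := by rw [← h, inf_top_eq]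
        _ = ⊥ := inf_bot_eq _
        _ = MTerm.eval K C v t ⊓ ⊥ := (inf_bot_eq _).symm
        _ = MTerm.eval K C v t := by rw [← h, inf_top_eq]
    have hNE : Nonempty (Wld K C v Γ) := by
      obtain ⟨f, _⟩ := atom_meet (K := K) (C := C) (v := v) (Γ := Γ) htop
      exact ⟨f⟩
    have heq := hR (Wld K C v Γ) hNE (RKf K C v Γ)
      (Relation.ReflTransGen fun a b => ∃ i, RKf K C v Γ i a b) rfl
      (fun q => {f : Wld K C v Γ | aE K C v Γ f ≤ v q})
    rw [truth hK1 hK2 hCE hGLB hP1 hPck hPneg hPsup hPinf s hsΓ,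
      truth hK1 hK2 hCE hGLB hP1 hPck hPneg hPsup hPinf t htΓ] at heq
    -- derive eval s = eval t
    apply hne
    have hdir : ∀ x y : MTerm I, x ∈ Γ → y ∈ Γ →
        ({f : Wld K C v Γ | aE K C v Γ f ≤ MTerm.eval K C v x}
          = {f : Wld K C v Γ | aE K C v Γ f ≤ MTerm.eval K C v y}) →
        MTerm.eval K C v x ≤ MTerm.eval K C v y := by
      intro x y hx hy hset
      by_contra hb
      rw [not_le_iff_ne_bot] at hb
      obtain ⟨f, hf⟩ := atom_meet (K := K) (C := C) (v := v) (Γ := Γ) hb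
      have hfx : aE K C v Γ f ≤ MTerm.eval K C v x := by
        refine compat f hx ?_
        intro hbb
        apply hf
        refine le_bot_iff.1 (le_trans ?_ hbb.le)
        exact le_inf inf_le_right (inf_le_left.trans inf_le_left)
      have hfy : aE K C v Γ f ≤ MTerm.eval K C v y := by
        have : f ∈ {f : Wld K C v Γ | aE K C v Γ f ≤ MTerm.eval K C v x} := hfx
        rw [hset] at this
        exact this
      apply hf
      refine le_bot_iff.1 (le_trans ?_ (inf_compl_eq_bot (a := MTerm.eval K C v y)).le)
      exact le_inf (inf_le_right.trans hfy) (inf_le_left.trans inf_le_right)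
    exact le_antisymm (hdir s t hsΓ htΓ heq) (hdir t s htΓ hsΓ heq.symm)
end
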